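/- arXiv:1105.4375 — 2 statements merged into one kernel-verified Lean document; each statement's English description precedes it below -/
import Mathlib

section
/- Let D > 0 and E > 0 be real constants and let x₀ ∈ ℝ. Then there is no differentiable function x : [0, ∞) → ℝ satisfying x(0) = x₀ and x′(t) = D·x(t)² + E for all t ≥ 0; i.e., solutions of the averaged equation dX/dt = D X² + E do not exist globally in time (they blow up in finite time). -/
/-!
Write `m = min D E`. Since `D y² + E ≥ m (1 + y²)`, the function `arctan ∘ x` grows with slope
at least `m` on `[0, ∞)`. As `arctan` takes values in an interval of length `π`, no solution
survives up to time `π / m`.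
-/

open Set Real

theorem add_mul_sub_le_of_le_hasDerivWithinAt_Ici {f f' : ℝ → ℝ} {a m : ℝ}
    (hf : ∀ t ∈ Ici a, HasDerivWithinAt f (f' t) (Ici a) t) (hm : ∀ t ∈ Ici a, m ≤ f' t)
    {t : ℝ} (ht : a ≤ t) : f a + m * (t - a) ≤ f t := by
  have affine (s : ℝ) : HasDerivAt (fun s => f a + m * (s - a)) m s := by
    simpa using (((hasDerivAt_id s).sub_const a).const_mul m).const_add (f a)
  refine image_le_of_deriv_right_le_deriv_boundary (f' := fun _ => m)
    (fun s _ => (affine s).continuousAt.continuousWithinAt)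
    (fun s _ => (affine s).hasDerivWithinAt) (by simp)
    (fun s hs => (hf s hs.1).continuousWithinAt.mono Icc_subset_Ici_self)
    (fun s hs => (hf s hs.1).mono (Ici_subset_Ici.2 hs.1))
    (fun s hs => hm s hs.1) ⟨ht, le_rfl⟩

theorem min_le_inv_one_add_sq_mul (D E y : ℝ) : min D E ≤ 1 / (1 + y ^ 2) * (D * y ^ 2 + E) := by
  rw [one_div_mul_eq_div, le_div_iff₀ (by positivity)]
  nlinarith [min_le_left D E, min_le_right D E, sq_nonneg y]

/-- Solutions of the averaged equation `dX/dt = D X² + E` with `D, E > 0`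
do not exist globally in time: there is no differentiable function on `[0, ∞)`
solving the ODE for all `t ≥ 0`. -/
theorem averaged_equation_no_global_solution
    (D E x₀ : ℝ) (hD : 0 < D) (hE : 0 < E) :
    ¬ ∃ x : ℝ → ℝ, x 0 = x₀ ∧
      ∀ t ∈ Set.Ici (0 : ℝ),
        HasDerivWithinAt x (D * (x t) ^ 2 + E) (Set.Ici (0 : ℝ)) t := by
  rintro ⟨x, -, hx⟩
  have hm : 0 < min D E := lt_min hD hE
  have hgrowth : arctan (x 0) + min D E * (π / min D E - 0) ≤ arctan (x (π / min D E)) :=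
    add_mul_sub_le_of_le_hasDerivWithinAt_Ici (fun t ht => (hx t ht).arctan)
      (fun t _ => min_le_inv_one_add_sq_mul D E (x t)) (div_pos pi_pos hm).le
  rw [sub_zero, mul_div_cancel₀ _ hm.ne'] at hgrowth
  linarith [arctan_lt_pi_div_two (x (π / min D E)), neg_pi_div_two_lt_arctan (x 0)]
end

section
/- Define B_{kℓm} := (1/4)·( (k+ℓ)·δ_{k+ℓ,m} − |k−ℓ|·δ_{|k−ℓ|,m} ) for positive integers k, ℓ, m, where δ is the Kronecker delta; set λ_k := k² − 1 for k ≥ 2; let (q_k)_{k≥2} be a bounded sequence of reals, and let ν ∈ ℝ. Then all the series below converge absolutely, and ν + ∑_{k=2}^∞ 2 B_{k11}² q_k²/λ_k² + ∑_{k,ℓ=2}^∞ B_{k11} B_{ℓℓk} q_ℓ²/(λ_k λ_ℓ) + ∑_{k,ℓ=2}^∞ 2 B_{kℓ1} B_{k1ℓ} q_k²/((λ_k + λ_ℓ) λ_k) = ν + q_2²/(8 λ_2²) + (1/8) ∑_{k=2}^∞ ( k λ_k q_{k+1}² − (k+1) λ_{k+1} q_k² ) / ( (λ_{k+1} + λ_k)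 λ_k λ_{k+1} ). -/
private lemma amplitude_aux (x qa qb : ℝ) (hx : 0 ≤ x) :
    ((x + 2) * ((x+1)*(x+3)) * qb ^ 2 - (x + 3) * ((x+2)*(x+4)) * qa ^ 2) /
        (((x+2)*(x+4) + (x+1)*(x+3)) * ((x+1)*(x+3)) * ((x+2)*(x+4)))
      = 8 * (-((x+3) * qa^2 / (8 * ((x+1)*(x+3) + (x+2)*(x+4)) * ((x+1)*(x+3)))))
        + 8 * ((x+2) * qb^2 / (8 * ((x+1)*(x+3) + (x+2)*(x+4)) * ((x+2)*(x+4)))) := by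
  have h1 : (x+1)*(x+3) ≠ 0 := by positivity
  have h2 : (x+2)*(x+4) ≠ 0 := by positivity
  have h3 : (x+1)*(x+3) + (x+2)*(x+4) ≠ 0 := by positivity
  have h4 : (x+2)*(x+4) + (x+1)*(x+3) ≠ 0 := by positivity
  field_simp
  ring


/-- The homogenization formula for the linear drift coefficient `A_∞` of the
amplitude equation of the stochastic Burgers equation: with `λ_k = k² − 1` and
bounded noise intensities `q_k`, all series converge absolutely and the general
formula reduces to the explicit expression. -/
theorem amplitude_equation_linear_drift_coefficient
    (B : ℕ → ℕ → ℕ → ℝ)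
    (hB : ∀ k l m : ℕ, B k l m =
      (1 / 4) * (((k : ℝ) + l) * (if k + l = m then (1:ℝ) else 0)
        - |(k : ℝ) - l| * (if ((k : ℤ) - l).natAbs = m then (1:ℝ) else 0)))
    (lam : ℕ → ℝ) (hlam : ∀ k, lam k = (k : ℝ) ^ 2 - 1)
    (q : ℕ → ℝ) (hq : ∃ Cb : ℝ, ∀ k, |q k| ≤ Cb) (ν : ℝ) :
    Summable (fun k : ℕ =>
      |2 * (B (k + 2) 1 1) ^ 2 * (q (k + 2)) ^ 2 / (lam (k + 2)) ^ 2|) ∧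
    Summable (fun p : ℕ × ℕ =>
      |B (p.1 + 2) 1 1 * B (p.2 + 2) (p.2 + 2) (p.1 + 2) * (q (p.2 + 2)) ^ 2 /
        (lam (p.1 + 2) * lam (p.2 + 2))|) ∧
    Summable (fun p : ℕ × ℕ =>
      |2 * B (p.1 + 2) (p.2 + 2) 1 * B (p.1 + 2) 1 (p.2 + 2) * (q (p.1 + 2)) ^ 2 /
        ((lam (p.1 + 2) + lam (p.2 + 2)) * lam (p.1 + 2))|) ∧
    Summable (fun k : ℕ =>
      |(((k : ℝ) + 2) * lam (k + 2) * (q (k + 3)) ^ 2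
          - ((k : ℝ) + 3) * lam (k + 3) * (q (k + 2)) ^ 2) /
        ((lam (k + 3) + lam (k + 2)) * lam (k + 2) * lam (k + 3))|) ∧
    ν + (∑' k : ℕ, 2 * (B (k + 2) 1 1) ^ 2 * (q (k + 2)) ^ 2 / (lam (k + 2)) ^ 2)
      + (∑' p : ℕ × ℕ,
          B (p.1 + 2) 1 1 * B (p.2 + 2) (p.2 + 2) (p.1 + 2) * (q (p.2 + 2)) ^ 2 /
            (lam (p.1 + 2) * lam (p.2 + 2)))
      + (∑' p : ℕ × ℕ,
          2 * B (p.1 + 2) (p.2 + 2) 1 * B (p.1 + 2) 1 (p.2 + 2) * (q (p.1 + 2)) ^ 2 /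
            ((lam (p.1 + 2) + lam (p.2 + 2)) * lam (p.1 + 2)))
    = ν + (q 2) ^ 2 / (8 * (lam 2) ^ 2)
      + (1 / 8) * ∑' k : ℕ,
          (((k : ℝ) + 2) * lam (k + 2) * (q (k + 3)) ^ 2
            - ((k : ℝ) + 3) * lam (k + 3) * (q (k + 2)) ^ 2) /
          ((lam (k + 3) + lam (k + 2)) * lam (k + 2) * lam (k + 3)) := by
  classical
  obtain ⟨Cb, hCb⟩ := hq
  have hCb0 : 0 ≤ Cb := (abs_nonneg _).trans (hCb 0)
  have hqsq : ∀ k, (q k) ^ 2 ≤ Cb ^ 2 := by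
    intro k
    have h := hCb k
    nlinarith [abs_nonneg (q k), sq_abs (q k)]
  -- values of B
  have hB211 : B 2 1 1 = -(1/4) := by rw [hB]; norm_num
  have hBk11 : ∀ k : ℕ, k ≠ 0 → B (k + 2) 1 1 = 0 := by
    intro k hk
    rw [hB]
    have h1 : ¬ (k + 2 + 1 = 1) := by omega
    have h2 : ¬ ((((k+2:ℕ)) : ℤ) - ((1:ℕ):ℤ)).natAbs = 1 := by omega
    rw [if_neg h1, if_neg h2]; ring
  have hBl1 : ∀ k : ℕ, B (k+2) (k+3) 1 = -(1/4) := by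
    intro k
    rw [hB]
    have h1 : ¬ (k + 2 + (k+3) = 1) := by omega
    have h2 : ((((k+2:ℕ)) : ℤ) - ((k+3:ℕ):ℤ)).natAbs = 1 := by omega
    rw [if_neg h1, if_pos h2]
    have h3 : |((k+2:ℕ):ℝ) - ((k+3:ℕ):ℝ)| = 1 := by
      push_cast
      rw [show ((k:ℝ)+2) - ((k:ℝ)+3) = -1 by ring]
      norm_num
    rw [h3]; ring
  have hBr1 : ∀ k : ℕ, B (k+2) 1 (k+3) = ((k:ℝ)+3)/4 := by
    intro k
    rw [hB]
    have h1 : k + 2 + 1 = k + 3 := by omega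
    have h2 : ¬ ((((k+2:ℕ)) : ℤ) - ((1:ℕ):ℤ)).natAbs = k+3 := by omega
    rw [if_pos h1, if_neg h2]
    push_cast; ring
  have hBl2 : ∀ k : ℕ, B (k+3) (k+2) 1 = -(1/4) := by
    intro k
    rw [hB]
    have h1 : ¬ (k + 3 + (k+2) = 1) := by omega
    have h2 : ((((k+3:ℕ)) : ℤ) - ((k+2:ℕ):ℤ)).natAbs = 1 := by omega
    rw [if_neg h1, if_pos h2]
    have h3 : |((k+3:ℕ):ℝ) - ((k+2:ℕ):ℝ)| = 1 := by
      push_cast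
      rw [show ((k:ℝ)+3) - ((k:ℝ)+2) = 1 by ring]
      norm_num
    rw [h3]; ring
  have hBr2 : ∀ k : ℕ, B (k+3) 1 (k+2) = -(((k:ℝ)+2)/4) := by
    intro k
    rw [hB]
    have h1 : ¬ (k + 3 + 1 = k + 2) := by omega
    have h2 : ((((k+3:ℕ)) : ℤ) - ((1:ℕ):ℤ)).natAbs = k+2 := by omega
    rw [if_neg h1, if_pos h2]
    have h3 : ((k+3:ℕ):ℝ) - ((1:ℕ):ℝ) = (k:ℝ)+2 := by push_cast; ring
    rw [h3, abs_of_nonneg (by positivity)]; ring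
  have hB0 : ∀ k l : ℕ, l ≠ k + 1 → k ≠ l + 1 → B (k+2) (l+2) 1 = 0 := by
    intro k l h h'
    rw [hB]
    have h1 : ¬ (k + 2 + (l+2) = 1) := by omega
    have h2 : ¬ ((((k+2:ℕ)) : ℤ) - ((l+2:ℕ):ℤ)).natAbs = 1 := by omega
    rw [if_neg h1, if_neg h2]; ring
  -- values of lam
  have hlamA : ∀ k : ℕ, lam (k+2) = ((k:ℝ)+1) * ((k:ℝ)+3) := by
    intro k; rw [hlam]; push_cast; ring
  have hlamB : ∀ k : ℕ, lam (k+3) = ((k:ℝ)+2) * ((k:ℝ)+4) := by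
    intro k; rw [hlam]; push_cast; ring
  -- base summable comparison series
  have hbase : Summable (fun k : ℕ => Cb^2 / ((k:ℝ)+1)^2) := by
    have h1 : Summable (fun n : ℕ => 1 / (n:ℝ)^2) :=
      Real.summable_one_div_nat_pow.mpr one_lt_two
    have h2 : Summable (fun n : ℕ => 1 / ((n:ℝ)+1)^2) := by
      have h3 := (summable_nat_add_iff 1).mpr h1
      exact h3.congr (fun k => by push_cast; ring)
    exact (h2.mul_left (Cb^2)).congr (fun k => by ring)
  -- explicit values of the double series along the two diagonals
  set va : ℕ → ℝ := fun k => -(((k:ℝ)+3) * (q (k+2))^2 /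
      (8 * (((k:ℝ)+1)*((k:ℝ)+3) + ((k:ℝ)+2)*((k:ℝ)+4)) * (((k:ℝ)+1)*((k:ℝ)+3)))) with hva_def
  set vb : ℕ → ℝ := fun k => ((k:ℝ)+2) * (q (k+3))^2 /
      (8 * (((k:ℝ)+1)*((k:ℝ)+3) + ((k:ℝ)+2)*((k:ℝ)+4)) * (((k:ℝ)+2)*((k:ℝ)+4))) with hvb_def
  set G : ℕ × ℕ → ℝ := fun p =>
      2 * B (p.1 + 2) (p.2 + 2) 1 * B (p.1 + 2) 1 (p.2 + 2) * (q (p.1 + 2)) ^ 2 /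
        ((lam (p.1 + 2) + lam (p.2 + 2)) * lam (p.1 + 2)) with hG_def
  have hGa : ∀ k : ℕ, G (k, k+1) = va k := by
    intro k
    show 2 * B (k + 2) (k+1+2) 1 * B (k + 2) 1 (k+1+2) * (q (k + 2)) ^ 2 /
        ((lam (k + 2) + lam (k+1+2)) * lam (k + 2)) = va k
    have e : k + 1 + 2 = k + 3 := by omega
    rw [e, hBl1 k, hBr1 k, hlamA k, hlamB k, hva_def]
    have h1 : ((k:ℝ)+1)*((k:ℝ)+3) ≠ 0 := by positivity
    have h2 : ((k:ℝ)+1)*((k:ℝ)+3) + ((k:ℝ)+2)*((k:ℝ)+4) ≠ 0 := by positivity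
    field_simp
    ring
  have hGb : ∀ k : ℕ, G (k+1, k) = vb k := by
    intro k
    show 2 * B (k+1+2) (k + 2) 1 * B (k+1+2) 1 (k + 2) * (q (k+1+2)) ^ 2 /
        ((lam (k+1+2) + lam (k + 2)) * lam (k+1+2)) = vb k
    have e : k + 1 + 2 = k + 3 := by omega
    rw [e, hBl2 k, hBr2 k, hlamA k, hlamB k, hvb_def]
    have h1 : ((k:ℝ)+2)*((k:ℝ)+4) ≠ 0 := by positivity
    have h2 : ((k:ℝ)+1)*((k:ℝ)+3) + ((k:ℝ)+2)*((k:ℝ)+4) ≠ 0 := by positivity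
    field_simp
    ring
  have hGzero : ∀ p : ℕ × ℕ, p.2 ≠ p.1 + 1 → p.1 ≠ p.2 + 1 → G p = 0 := by
    intro p h h'
    rw [hG_def]
    simp only
    rw [hB0 p.1 p.2 h h']
    ring
  -- the two diagonal pieces
  set G1 : ℕ × ℕ → ℝ := fun p => if p.2 = p.1 + 1 then G p else 0 with hG1_def
  set G2 : ℕ × ℕ → ℝ := fun p => if p.1 = p.2 + 1 then G p else 0 with hG2_def
  have hGsplit : ∀ p, G p = G1 p + G2 p := by
    intro p
    rw [hG1_def, hG2_def]
    simp only
    by_cases h : p.2 = p.1 + 1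
    · have h' : ¬ p.1 = p.2 + 1 := by omega
      rw [if_pos h, if_neg h']; ring
    · by_cases h' : p.1 = p.2 + 1
      · rw [if_neg h, if_pos h']; ring
      · rw [if_neg h, if_neg h', hGzero p h h']; ring
  have hi1 : Function.Injective (fun k : ℕ => ((k, k+1) : ℕ × ℕ)) := by
    intro a b h
    simpa using congrArg Prod.fst h
  have hi2 : Function.Injective (fun k : ℕ => ((k+1, k) : ℕ × ℕ)) := by
    intro a b h
    simpa using congrArg Prod.snd h
  have hG1eq : ∀ k : ℕ, G1 (k, k+1) = va k := by
    intro k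
    rw [hG1_def]; simp only [if_pos rfl]
    exact hGa k
  have hG2eq : ∀ k : ℕ, G2 (k+1, k) = vb k := by
    intro k
    rw [hG2_def]; simp only [if_pos rfl]
    exact hGb k
  have hG1z : ∀ p : ℕ × ℕ, p ∉ Set.range (fun k : ℕ => ((k, k+1) : ℕ × ℕ)) → G1 p = 0 := by
    intro p hp
    by_cases h : p.2 = p.1 + 1
    · exact absurd ⟨p.1, by ext <;> simp [h]⟩ hp
    · rw [hG1_def]; simp [h]
  have hG2z : ∀ p : ℕ × ℕ, p ∉ Set.range (fun k : ℕ => ((k+1, k) : ℕ × ℕ)) → G2 p = 0 := by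
    intro p hp
    by_cases h : p.1 = p.2 + 1
    · exact absurd ⟨p.2, by ext <;> simp [h]⟩ hp
    · rw [hG2_def]; simp [h]
  -- bounds for the diagonal values
  have hvab : ∀ k : ℕ, |va k| ≤ Cb^2 / ((k:ℝ)+1)^2 := by
    intro k
    have hx : (0:ℝ) ≤ (k:ℝ) := Nat.cast_nonneg k
    rw [hva_def]
    simp only
    rw [abs_neg, abs_of_nonneg (by positivity)]
    rw [div_le_div_iff₀ (by positivity) (by positivity)]
    nlinarith [hqsq (k+2), sq_nonneg (q (k+2)), hCb0, hx, sq_nonneg Cb,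
      mul_le_mul_of_nonneg_right (hqsq (k+2))
        (show (0:ℝ) ≤ ((k:ℝ)+3)*((k:ℝ)+1)^2 by positivity),
      mul_nonneg hx hx, mul_nonneg (mul_nonneg hx hx) hx,
      mul_nonneg (mul_nonneg (mul_nonneg hx hx) hx) hx,
      mul_nonneg (mul_nonneg hCb0 hCb0) hx,
      mul_nonneg (mul_nonneg (mul_nonneg hCb0 hCb0) hx) hx,
      mul_nonneg (mul_nonneg (mul_nonneg (mul_nonneg hCb0 hCb0) hx) hx) hx,
      mul_nonneg (mul_nonneg (mul_nonneg (mul_nonneg (mul_nonneg hCb0 hCb0) hx) hx) hx) hx]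
  have hvbb : ∀ k : ℕ, |vb k| ≤ Cb^2 / ((k:ℝ)+1)^2 := by
    intro k
    have hx : (0:ℝ) ≤ (k:ℝ) := Nat.cast_nonneg k
    rw [hvb_def]
    simp only
    rw [abs_of_nonneg (by positivity)]
    rw [div_le_div_iff₀ (by positivity) (by positivity)]
    nlinarith [hqsq (k+3), sq_nonneg (q (k+3)), hCb0, hx, sq_nonneg Cb,
      mul_le_mul_of_nonneg_right (hqsq (k+3))
        (show (0:ℝ) ≤ ((k:ℝ)+2)*((k:ℝ)+1)^2 by positivity),
      mul_nonneg hx hx, mul_nonneg (mul_nonneg hx hx) hx,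
      mul_nonneg (mul_nonneg (mul_nonneg hx hx) hx) hx,
      mul_nonneg (mul_nonneg hCb0 hCb0) hx,
      mul_nonneg (mul_nonneg (mul_nonneg hCb0 hCb0) hx) hx,
      mul_nonneg (mul_nonneg (mul_nonneg (mul_nonneg hCb0 hCb0) hx) hx) hx,
      mul_nonneg (mul_nonneg (mul_nonneg (mul_nonneg (mul_nonneg hCb0 hCb0) hx) hx) hx) hx]
  have hva_s : Summable (fun k : ℕ => |va k|) :=
    Summable.of_nonneg_of_le (fun k => abs_nonneg _) hvab hbase
  have hvb_s : Summable (fun k : ℕ => |vb k|) :=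
    Summable.of_nonneg_of_le (fun k => abs_nonneg _) hvbb hbase
  -- summability of the diagonal pieces on ℕ × ℕ
  have hG1abs : Summable (fun p : ℕ × ℕ => |G1 p|) := by
    refine (hi1.summable_iff (fun p hp => by rw [hG1z p hp]; simp)).mp ?_
    exact hva_s.congr (fun k => by simp only [Function.comp]; rw [hG1eq k])
  have hG2abs : Summable (fun p : ℕ × ℕ => |G2 p|) := by
    refine (hi2.summable_iff (fun p hp => by rw [hG2z p hp]; simp)).mp ?_
    exact hvb_s.congr (fun k => by simp only [Function.comp]; rw [hG2eq k])
  have hGabs : Summable (fun p : ℕ × ℕ => |G p|) := by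
    refine Summable.of_nonneg_of_le (fun p => abs_nonneg _) (fun p => ?_) (hG1abs.add hG2abs)
    rw [hGsplit p]
    exact abs_add_le _ _
  -- summability statement 1
  have hf1zero : ∀ k : ℕ, k ≠ 0 →
      2 * (B (k + 2) 1 1) ^ 2 * (q (k + 2)) ^ 2 / (lam (k + 2)) ^ 2 = 0 := by
    intro k hk
    rw [hBk11 k hk]; ring
  have S1 : Summable (fun k : ℕ =>
      |2 * (B (k + 2) 1 1) ^ 2 * (q (k + 2)) ^ 2 / (lam (k + 2)) ^ 2|) := by
    apply summable_of_ne_finset_zero (s := {(0:ℕ)})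
    intro b hb
    rw [hf1zero b (by simpa using hb)]
    simp
  -- summability statement 2 : all terms vanish
  have hf2zero : ∀ p : ℕ × ℕ,
      B (p.1 + 2) 1 1 * B (p.2 + 2) (p.2 + 2) (p.1 + 2) * (q (p.2 + 2)) ^ 2 /
        (lam (p.1 + 2) * lam (p.2 + 2)) = 0 := by
    intro p
    rcases eq_or_ne p.1 0 with h | h
    · have hz : B (p.2 + 2) (p.2 + 2) (p.1 + 2) = 0 := by
        rw [hB, h]
        have h1 : ¬ (p.2 + 2 + (p.2 + 2) = 0 + 2) := by omega
        have h2 : ¬ ((((p.2+2:ℕ)) : ℤ) - ((p.2+2:ℕ):ℤ)).natAbs = 0 + 2 := by omega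
        rw [if_neg h1, if_neg h2]; ring
      rw [hz]; ring
    · rw [hBk11 p.1 h]; ring
  have S2 : Summable (fun p : ℕ × ℕ =>
      |B (p.1 + 2) 1 1 * B (p.2 + 2) (p.2 + 2) (p.1 + 2) * (q (p.2 + 2)) ^ 2 /
        (lam (p.1 + 2) * lam (p.2 + 2))|) := by
    have : (fun p : ℕ × ℕ =>
        |B (p.1 + 2) 1 1 * B (p.2 + 2) (p.2 + 2) (p.1 + 2) * (q (p.2 + 2)) ^ 2 /
          (lam (p.1 + 2) * lam (p.2 + 2))|) = fun _ => 0 := by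
      funext p; rw [hf2zero p]; simp
    rw [this]; exact summable_zero
  -- the right-hand side series and its relation to va, vb
  have hs : ∀ k : ℕ,
      (((k : ℝ) + 2) * lam (k + 2) * (q (k + 3)) ^ 2
          - ((k : ℝ) + 3) * lam (k + 3) * (q (k + 2)) ^ 2) /
        ((lam (k + 3) + lam (k + 2)) * lam (k + 2) * lam (k + 3))
        = 8 * va k + 8 * vb k := by
    intro k
    rw [hlamA k, hlamB k, hva_def, hvb_def]
    exact amplitude_aux (k:ℝ) (q (k+2)) (q (k+3)) (Nat.cast_nonneg k)
  have S4 : Summable (fun k : ℕ =>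
      |(((k : ℝ) + 2) * lam (k + 2) * (q (k + 3)) ^ 2
          - ((k : ℝ) + 3) * lam (k + 3) * (q (k + 2)) ^ 2) /
        ((lam (k + 3) + lam (k + 2)) * lam (k + 2) * lam (k + 3))|) := by
    refine Summable.of_nonneg_of_le (fun k => abs_nonneg _) (fun k => ?_)
      ((hva_s.add hvb_s).mul_left 8)
    rw [hs k]
    calc |8 * va k + 8 * vb k| ≤ |8 * va k| + |8 * vb k| := abs_add_le _ _
      _ = 8 * (|va k| + |vb k|) := by rw [abs_mul, abs_mul]; norm_num; ring
  -- now the tsum computations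
  have hva_sum : Summable va := summable_abs_iff.mp hva_s
  have hvb_sum : Summable vb := summable_abs_iff.mp hvb_s
  have hG1sum : Summable G1 := summable_abs_iff.mp hG1abs
  have hG2sum : Summable G2 := summable_abs_iff.mp hG2abs
  have hT1 : (∑' k : ℕ, 2 * (B (k + 2) 1 1) ^ 2 * (q (k + 2)) ^ 2 / (lam (k + 2)) ^ 2)
      = (q 2) ^ 2 / (8 * (lam 2) ^ 2) := by
    rw [tsum_eq_single 0 (fun b hb => hf1zero b hb)]
    show 2 * (B 2 1 1) ^ 2 * (q 2) ^ 2 / (lam 2) ^ 2 = (q 2) ^ 2 / (8 * (lam 2) ^ 2)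
    rw [hB211]
    ring
  have hT2 : (∑' p : ℕ × ℕ,
      B (p.1 + 2) 1 1 * B (p.2 + 2) (p.2 + 2) (p.1 + 2) * (q (p.2 + 2)) ^ 2 /
        (lam (p.1 + 2) * lam (p.2 + 2))) = 0 := by
    have : (fun p : ℕ × ℕ =>
        B (p.1 + 2) 1 1 * B (p.2 + 2) (p.2 + 2) (p.1 + 2) * (q (p.2 + 2)) ^ 2 /
          (lam (p.1 + 2) * lam (p.2 + 2))) = fun _ => 0 := by
      funext p; exact hf2zero p
    rw [this, tsum_zero]
  have hg1sup : Function.support G1 ⊆ Set.range (fun k : ℕ => ((k, k+1) : ℕ × ℕ)) := by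
    intro p hp
    by_contra hpr
    exact hp (hG1z p hpr)
  have hg2sup : Function.support G2 ⊆ Set.range (fun k : ℕ => ((k+1, k) : ℕ × ℕ)) := by
    intro p hp
    by_contra hpr
    exact hp (hG2z p hpr)
  have hT3a : (∑' p : ℕ × ℕ, G1 p) = ∑' k : ℕ, va k := by
    rw [← hi1.tsum_eq hg1sup]
    exact tsum_congr (fun k => hG1eq k)
  have hT3b : (∑' p : ℕ × ℕ, G2 p) = ∑' k : ℕ, vb k := by
    rw [← hi2.tsum_eq hg2sup]
    exact tsum_congr (fun k => hG2eq k)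
  have hT3 : (∑' p : ℕ × ℕ, G p) = (∑' k : ℕ, va k) + (∑' k : ℕ, vb k) := by
    rw [tsum_congr hGsplit, Summable.tsum_add hG1sum hG2sum, hT3a, hT3b]
  have hT4 : (∑' k : ℕ,
      (((k : ℝ) + 2) * lam (k + 2) * (q (k + 3)) ^ 2
          - ((k : ℝ) + 3) * lam (k + 3) * (q (k + 2)) ^ 2) /
        ((lam (k + 3) + lam (k + 2)) * lam (k + 2) * lam (k + 3)))
      = 8 * (∑' k : ℕ, va k) + 8 * (∑' k : ℕ, vb k) := by
    rw [tsum_congr hs, Summable.tsum_add (hva_sum.mul_left 8) (hvb_sum.mul_left 8),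
      tsum_mul_left, tsum_mul_left]
  refine ⟨S1, S2, hGabs, S4, ?_⟩
  rw [hT1, hT2, hT3, hT4]
  ring
end
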